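/- Let n ≥ 2, κ > 0, ε > 0, μ > 0 and set a_1 = 6/(n−1), a_2 = −2. Define u : ℝ^n → ℝ^n by u(x) = (1/2 + G) e_n + (G^2 − 1/4)[ Σ_{i=1}^{n−1} (a_1 x_i/δ) e_i + G A e_n ], where A(x') = 4κ a_1 |x'|^2/δ + a_2, and define the pressure p : ℝ^n → ℝ by p(x) = −μ a_1/(4κ δ^2) + 3 μ x_n^2 A / δ^3, with δ = δ(x') and G = G(x). Then at every point x ∈ ℝ^n: for each j ∈ {1, …, n−1}, μ ∂_n ∂_n u^{(j)}(x) − ∂_j p(x) = −3 μ x_n^2 ∂_j( δ^{−3} (4κ a_1 |x'|^2/δ + a_2) ), and for j = n, μ ∂_n ∂_n u^{(n)}(x) − ∂_n p(x) = 0. Here u^{(j)} denotes the j-th component of u. -/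

import Mathlib

noncomputable section

/-- `δ(x') = ε + 2κ|x'|²` on `ℝ^{n-1}`. -/
def del (d : ℕ) (κ ε : ℝ) (x' : EuclideanSpace ℝ (Fin d)) : ℝ :=
  ε + 2 * κ * ‖x'‖ ^ 2

/-- `G(x) = x_n / δ(x')`, for `x = (x', x_n) ∈ ℝ^{n-1} × ℝ`. -/
def Gf (d : ℕ) (κ ε : ℝ) (x : EuclideanSpace ℝ (Fin d) × ℝ) : ℝ :=
  x.2 / del d κ ε x.1

/-- Second partial derivative `∂_n ∂_n f` in the vertical variable `x_n`. -/
def dnn {d : ℕ} (f : EuclideanSpace ℝ (Fin d) × ℝ → ℝ)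
    (x : EuclideanSpace ℝ (Fin d) × ℝ) : ℝ :=
  fderiv ℝ (fun y => fderiv ℝ f y (0, 1)) x (0, 1)

/-- The auxiliary velocity field
`u(x) = (1/2 + G) e_n + (G² − 1/4)[ ∑_{i=1}^{n−1} (a₁ x_i/δ) e_i + G A e_n ]`,
where `A(x') = 4κ a₁ |x'|²/δ + a₂`. -/
def uN (d : ℕ) (κ ε a1 a2 : ℝ) (x : EuclideanSpace ℝ (Fin d) × ℝ) :
    EuclideanSpace ℝ (Fin d) × ℝ :=
  ((Gf d κ ε x ^ 2 - 1 / 4) •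
      ∑ i : Fin d, (a1 * x.1 i / del d κ ε x.1) • EuclideanSpace.single i (1 : ℝ),
    (1 / 2 + Gf d κ ε x)
      + (Gf d κ ε x ^ 2 - 1 / 4) *
          (Gf d κ ε x * (4 * κ * a1 * ‖x.1‖ ^ 2 / del d κ ε x.1 + a2)))

/-- The auxiliary pressure `p(x) = −μ a₁/(4κ δ²) + 3μ x_n² A / δ³`, where
`A(x') = 4κ a₁ |x'|²/δ + a₂`. -/
def pN (d : ℕ) (κ ε μ a1 a2 : ℝ) (x : EuclideanSpace ℝ (Fin d) × ℝ) : ℝ :=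
  -(μ * a1) / (4 * κ * del d κ ε x.1 ^ 2)
    + 3 * μ * x.2 ^ 2 * (4 * κ * a1 * ‖x.1‖ ^ 2 / del d κ ε x.1 + a2) / del d κ ε x.1 ^ 3


/-- Quotient rule (differentiability only) for real-valued maps on a normed space. -/
lemma diff_div {E : Type*} [NormedAddCommGroup E] [NormedSpace ℝ E]
    {c f : E → ℝ} (hc : Differentiable ℝ c) (hf : Differentiable ℝ f)
    (h : ∀ y, f y ≠ 0) : Differentiable ℝ (fun y => c y / f y) := by
  simp only [div_eq_mul_inv]
  exact hc.mul (hf.inv h)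

open ContinuousLinearMap in
/-- Directional derivative of a function that is polynomial (degree ≤ 3, Horner form)
in the vertical variable. -/
lemma poly3_fderiv {d : ℕ} (g0 g1 g2 g3 : EuclideanSpace ℝ (Fin d) → ℝ)
    (h0 : Differentiable ℝ g0) (h1 : Differentiable ℝ g1)
    (h2 : Differentiable ℝ g2) (h3 : Differentiable ℝ g3)
    (x : EuclideanSpace ℝ (Fin d) × ℝ) (v : EuclideanSpace ℝ (Fin d)) (t : ℝ) :
    fderiv ℝ (fun y : EuclideanSpace ℝ (Fin d) × ℝ =>
        g0 y.1 + y.2 * (g1 y.1 + y.2 * (g2 y.1 + y.2 * g3 y.1))) x (v, t)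
      = fderiv ℝ g0 x.1 v + (fderiv ℝ g1 x.1 v * x.2 + g1 x.1 * t)
        + (fderiv ℝ g2 x.1 v * x.2 ^ 2 + g2 x.1 * (2 * x.2 * t))
        + (fderiv ℝ g3 x.1 v * x.2 ^ 3 + g3 x.1 * (3 * x.2 ^ 2 * t)) := by
  have hfst : HasFDerivAt (Prod.fst : EuclideanSpace ℝ (Fin d) × ℝ → EuclideanSpace ℝ (Fin d))
      (fst ℝ _ ℝ) x := hasFDerivAt_fst
  have H0 : HasFDerivAt (fun y : EuclideanSpace ℝ (Fin d) × ℝ => g0 y.1)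
      ((fderiv ℝ g0 x.1).comp (fst ℝ _ ℝ)) x := ((h0 x.1).hasFDerivAt).comp x hfst
  have H1 : HasFDerivAt (fun y : EuclideanSpace ℝ (Fin d) × ℝ => g1 y.1)
      ((fderiv ℝ g1 x.1).comp (fst ℝ _ ℝ)) x := ((h1 x.1).hasFDerivAt).comp x hfst
  have H2 : HasFDerivAt (fun y : EuclideanSpace ℝ (Fin d) × ℝ => g2 y.1)
      ((fderiv ℝ g2 x.1).comp (fst ℝ _ ℝ)) x := ((h2 x.1).hasFDerivAt).comp x hfst
  have H3 : HasFDerivAt (fun y : EuclideanSpace ℝ (Fin d) × ℝ => g3 y.1)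
      ((fderiv ℝ g3 x.1).comp (fst ℝ _ ℝ)) x := ((h3 x.1).hasFDerivAt).comp x hfst
  have Hs : HasFDerivAt (fun y : EuclideanSpace ℝ (Fin d) × ℝ => y.2) (snd ℝ _ ℝ) x :=
    hasFDerivAt_snd
  have K2 := H2.add (Hs.mul H3)
  have K1 := H1.add (Hs.mul K2)
  have K0 := H0.add (Hs.mul K1)
  rw [(show HasFDerivAt (fun y : EuclideanSpace ℝ (Fin d) × ℝ =>
      g0 y.1 + y.2 * (g1 y.1 + y.2 * (g2 y.1 + y.2 * g3 y.1))) _ x from K0).fderiv]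
  simp only [Pi.add_apply, Pi.mul_apply, ContinuousLinearMap.add_apply, ContinuousLinearMap.comp_apply,
    ContinuousLinearMap.smul_apply, ContinuousLinearMap.coe_fst', ContinuousLinearMap.coe_snd',
    smul_eq_mul]
  ring

/-- Vertical second derivative of a function polynomial in the vertical variable. -/
lemma poly3_dnn {d : ℕ} (g0 g1 g2 g3 : EuclideanSpace ℝ (Fin d) → ℝ)
    (h0 : Differentiable ℝ g0) (h1 : Differentiable ℝ g1)
    (h2 : Differentiable ℝ g2) (h3 : Differentiable ℝ g3)
    (x : EuclideanSpace ℝ (Fin d) × ℝ) :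
    dnn (fun y : EuclideanSpace ℝ (Fin d) × ℝ =>
        g0 y.1 + y.2 * (g1 y.1 + y.2 * (g2 y.1 + y.2 * g3 y.1))) x
      = 2 * g2 x.1 + 6 * g3 x.1 * x.2 := by
  unfold dnn
  have hfun : (fun y : EuclideanSpace ℝ (Fin d) × ℝ =>
      fderiv ℝ (fun y : EuclideanSpace ℝ (Fin d) × ℝ =>
        g0 y.1 + y.2 * (g1 y.1 + y.2 * (g2 y.1 + y.2 * g3 y.1))) y (0, 1))
      = fun y : EuclideanSpace ℝ (Fin d) × ℝ =>
        g1 y.1 + y.2 * (2 * g2 y.1 + y.2 * (3 * g3 y.1 + y.2 * 0)) := by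
    funext y
    rw [poly3_fderiv g0 g1 g2 g3 h0 h1 h2 h3 y 0 1]
    simp only [map_zero]
    ring
  rw [hfun]
  have h2' : Differentiable ℝ (fun y' => 2 * g2 y') := h2.const_mul 2
  have h3' : Differentiable ℝ (fun y' => 3 * g3 y') := h3.const_mul 3
  have hkey := poly3_fderiv g1 (fun y' => 2 * g2 y') (fun y' => 3 * g3 y') (fun _ => 0)
    h1 h2' h3' (differentiable_const 0) x 0 1
  rw [hkey]
  simp only [map_zero]
  ring

open ContinuousLinearMap in
lemma hasFDerivAt_del (d : ℕ) (κ ε : ℝ) (y' : EuclideanSpace ℝ (Fin d)) :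
    HasFDerivAt (del d κ ε) ((2 * κ) • (2 • innerSL ℝ y')) y' :=
  (((hasStrictFDerivAt_norm_sq y').hasFDerivAt).const_mul (2 * κ)).const_add ε

/-- With `a₁ = 6/(n−1)`, `a₂ = −2`: for every horizontal index `j`,
`μ ∂_n∂_n u^{(j)} − ∂_j p = −3μ x_n² ∂_j( δ⁻³ (4κ a₁ |x'|²/δ + a₂) )`, and
`μ ∂_n∂_n u^{(n)} − ∂_n p = 0`. -/
theorem stokes_residual_normal_field
    (n : ℕ) (hn : 2 ≤ n) (κ ε μ : ℝ) (hκ : 0 < κ) (hε : 0 < ε) (hμ : 0 < μ)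
    (a1 a2 : ℝ) (ha1 : a1 = 6 / ((n : ℝ) - 1)) (ha2 : a2 = -2)
    (x : EuclideanSpace ℝ (Fin (n - 1)) × ℝ) :
    (∀ j : Fin (n - 1),
        μ * dnn (fun y => (uN (n - 1) κ ε a1 a2 y).1 j) x
            - fderiv ℝ (pN (n - 1) κ ε μ a1 a2) x (EuclideanSpace.single j 1, 0)
          = -(3 * μ * x.2 ^ 2) *
              fderiv ℝ (fun y' : EuclideanSpace ℝ (Fin (n - 1)) =>
                  (del (n - 1) κ ε y' ^ 3)⁻¹ *
                    (4 * κ * a1 * ‖y'‖ ^ 2 / del (n - 1) κ ε y' + a2))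
                x.1 (EuclideanSpace.single j 1)) ∧
      μ * dnn (fun y => (uN (n - 1) κ ε a1 a2 y).2) x
          - fderiv ℝ (pN (n - 1) κ ε μ a1 a2) x (0, 1) = 0 := by
  have hκ' : κ ≠ 0 := hκ.ne'
  have hDpos : ∀ y' : EuclideanSpace ℝ (Fin (n - 1)), 0 < del (n - 1) κ ε y' := by
    intro y'; unfold del; positivity
  have hDne : ∀ y', del (n - 1) κ ε y' ≠ 0 := fun y' => (hDpos y').ne'
  have hDdiff : Differentiable ℝ (del (n - 1) κ ε) :=
    fun y' => (hasFDerivAt_del _ κ ε y').differentiableAt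
  have hN : Differentiable ℝ (fun y' : EuclideanSpace ℝ (Fin (n - 1)) => ‖y'‖ ^ 2) :=
    (contDiff_norm_sq ℝ (n := 1)).differentiable one_ne_zero
  have hA : Differentiable ℝ (fun y' : EuclideanSpace ℝ (Fin (n - 1)) =>
      4 * κ * a1 * ‖y'‖ ^ 2 / del (n - 1) κ ε y' + a2) :=
    (diff_div (hN.const_mul (4 * κ * a1)) hDdiff hDne).add_const a2
  have hF : Differentiable ℝ (fun y' : EuclideanSpace ℝ (Fin (n - 1)) =>
      (del (n - 1) κ ε y' ^ 3)⁻¹ * (4 * κ * a1 * ‖y'‖ ^ 2 / del (n - 1) κ ε y' + a2)) :=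
    ((hDdiff.pow 3).inv (fun y' => pow_ne_zero _ (hDne y'))).mul hA
  have hq : Differentiable ℝ (fun y' : EuclideanSpace ℝ (Fin (n - 1)) =>
      -(μ * a1) / (4 * κ * del (n - 1) κ ε y' ^ 2)) :=
    diff_div (differentiable_const _) ((hDdiff.pow 2).const_mul (4 * κ))
      (fun y' => mul_ne_zero (by positivity) (pow_ne_zero _ (hDne y')))
  -- rewrite of pN as a vertical polynomial
  have hp : pN (n - 1) κ ε μ a1 a2 = fun y : EuclideanSpace ℝ (Fin (n - 1)) × ℝ =>
      (fun y' => -(μ * a1) / (4 * κ * del (n - 1) κ ε y' ^ 2)) y.1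
        + y.2 * ((fun _ => (0 : ℝ)) y.1
          + y.2 * ((fun y' => 3 * μ * ((del (n - 1) κ ε y' ^ 3)⁻¹ *
              (4 * κ * a1 * ‖y'‖ ^ 2 / del (n - 1) κ ε y' + a2))) y.1
            + y.2 * (fun _ => (0 : ℝ)) y.1)) := by
    funext y
    unfold pN
    ring
  have hg2p : Differentiable ℝ (fun y' : EuclideanSpace ℝ (Fin (n - 1)) =>
      3 * μ * ((del (n - 1) κ ε y' ^ 3)⁻¹ *
        (4 * κ * a1 * ‖y'‖ ^ 2 / del (n - 1) κ ε y' + a2))) := hF.const_mul (3 * μ)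
  have hqval : ∀ j : Fin (n - 1),
      fderiv ℝ (fun y' : EuclideanSpace ℝ (Fin (n - 1)) =>
          -(μ * a1) / (4 * κ * del (n - 1) κ ε y' ^ 2)) x.1 (EuclideanSpace.single j 1)
        = 2 * μ * a1 * x.1 j / del (n - 1) κ ε x.1 ^ 3 := by
    intro j
    have hqeq : (fun y' : EuclideanSpace ℝ (Fin (n - 1)) =>
        -(μ * a1) / (4 * κ * del (n - 1) κ ε y' ^ 2))
        = fun y' => (-(μ * a1) / (4 * κ)) *
            ((del (n - 1) κ ε y' * del (n - 1) κ ε y')⁻¹) := by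
      funext y'; ring
    rw [hqeq]
    have hmulD := (hasFDerivAt_del (n - 1) κ ε x.1).mul (hasFDerivAt_del (n - 1) κ ε x.1)
    have h1 : HasFDerivAt
        (fun y' : EuclideanSpace ℝ (Fin (n - 1)) =>
          (del (n - 1) κ ε y' * del (n - 1) κ ε y')⁻¹)
        ((ContinuousLinearMap.smulRight (1 : ℝ →L[ℝ] ℝ)
            (-((del (n - 1) κ ε x.1 * del (n - 1) κ ε x.1) ^ 2)⁻¹)).comp
          (del (n - 1) κ ε x.1 • ((2 * κ) • (2 • innerSL ℝ x.1)) +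
            del (n - 1) κ ε x.1 • ((2 * κ) • (2 • innerSL ℝ x.1)))) x.1 :=
      (hasFDerivAt_inv (mul_ne_zero (hDne x.1) (hDne x.1))).comp x.1 hmulD
    have h2 := h1.const_mul (-(μ * a1) / (4 * κ))
    rw [h2.fderiv]
    simp only [ContinuousLinearMap.smul_apply, ContinuousLinearMap.add_apply,
      ContinuousLinearMap.neg_apply, ContinuousLinearMap.comp_apply,
      ContinuousLinearMap.smulRight_apply, ContinuousLinearMap.one_apply, nsmul_eq_mul,
      smul_eq_mul, innerSL_apply_apply,
      EuclideanSpace.inner_single_right, RCLike.star_def, conj_trivial, mul_one]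
    have hD := hDne x.1
    field_simp
    ring
  have hmul : fderiv ℝ (fun y' : EuclideanSpace ℝ (Fin (n - 1)) =>
      3 * μ * ((del (n - 1) κ ε y' ^ 3)⁻¹ *
        (4 * κ * a1 * ‖y'‖ ^ 2 / del (n - 1) κ ε y' + a2))) x.1
      = (3 * μ) • fderiv ℝ (fun y' : EuclideanSpace ℝ (Fin (n - 1)) =>
          (del (n - 1) κ ε y' ^ 3)⁻¹ *
            (4 * κ * a1 * ‖y'‖ ^ 2 / del (n - 1) κ ε y' + a2)) x.1 :=
    fderiv_const_mul (hF x.1) (3 * μ)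
  constructor
  · intro j
    have hcoord : Differentiable ℝ (fun y' : EuclideanSpace ℝ (Fin (n - 1)) => y' j) :=
      by have := (EuclideanSpace.proj (𝕜 := ℝ) (ι := Fin (n - 1)) j).differentiable; exact this
    have hg0u : Differentiable ℝ (fun y' : EuclideanSpace ℝ (Fin (n - 1)) =>
        -(a1 * y' j) / (4 * del (n - 1) κ ε y')) :=
      diff_div ((hcoord.const_mul a1).neg) (hDdiff.const_mul 4)
        (fun y' => mul_ne_zero four_ne_zero (hDne y'))
    have hg2u : Differentiable ℝ (fun y' : EuclideanSpace ℝ (Fin (n - 1)) =>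
        a1 * y' j / del (n - 1) κ ε y' ^ 3) :=
      diff_div (hcoord.const_mul a1) (hDdiff.pow 3) (fun y' => pow_ne_zero _ (hDne y'))
    have hu1 : (fun y => (uN (n - 1) κ ε a1 a2 y).1 j)
        = fun y : EuclideanSpace ℝ (Fin (n - 1)) × ℝ =>
          (fun y' => -(a1 * y' j) / (4 * del (n - 1) κ ε y')) y.1
            + y.2 * ((fun _ => (0 : ℝ)) y.1
              + y.2 * ((fun y' => a1 * y' j / del (n - 1) κ ε y' ^ 3) y.1
                + y.2 * (fun _ => (0 : ℝ)) y.1)) := by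
      funext y
      have hne := hDne y.1
      simp only [uN, Gf, PiLp.smul_apply, smul_eq_mul]
      rw [WithLp.ofLp_sum, Finset.sum_apply]
      simp only [PiLp.smul_apply, WithLp.ofLp_smul, Pi.smul_apply, smul_eq_mul, EuclideanSpace.single_apply, mul_ite,
        mul_one, mul_zero, Finset.sum_ite_eq', Finset.sum_ite_eq, Finset.mem_univ, if_true]
      field_simp
      ring
    rw [hu1, poly3_dnn _ _ _ _ hg0u (differentiable_const 0) hg2u (differentiable_const 0) x,
      hp, poly3_fderiv _ _ _ _ hq (differentiable_const 0) hg2p (differentiable_const 0) x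
        (EuclideanSpace.single j 1) 0]
    simp only [fderiv_const, fderiv_fun_const, Pi.zero_apply, ContinuousLinearMap.zero_apply, hqval j, hmul,
      ContinuousLinearMap.smul_apply, smul_eq_mul, mul_zero, add_zero, zero_mul, zero_add,
      mul_one]
    ring
  · have hg1v : Differentiable ℝ (fun y' : EuclideanSpace ℝ (Fin (n - 1)) =>
        1 / del (n - 1) κ ε y'
          - (4 * κ * a1 * ‖y'‖ ^ 2 / del (n - 1) κ ε y' + a2) / (4 * del (n - 1) κ ε y')) :=
      (diff_div (differentiable_const 1) hDdiff hDne).sub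
        (diff_div hA (hDdiff.const_mul 4) (fun y' => mul_ne_zero four_ne_zero (hDne y')))
    have hg3v : Differentiable ℝ (fun y' : EuclideanSpace ℝ (Fin (n - 1)) =>
        (4 * κ * a1 * ‖y'‖ ^ 2 / del (n - 1) κ ε y' + a2) / del (n - 1) κ ε y' ^ 3) :=
      diff_div hA (hDdiff.pow 3) (fun y' => pow_ne_zero _ (hDne y'))
    have hu2 : (fun y => (uN (n - 1) κ ε a1 a2 y).2)
        = fun y : EuclideanSpace ℝ (Fin (n - 1)) × ℝ =>
          (fun _ => (1 : ℝ) / 2) y.1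
            + y.2 * ((fun y' => 1 / del (n - 1) κ ε y'
                - (4 * κ * a1 * ‖y'‖ ^ 2 / del (n - 1) κ ε y' + a2) /
                    (4 * del (n - 1) κ ε y')) y.1
              + y.2 * ((fun _ => (0 : ℝ)) y.1
                + y.2 * (fun y' => (4 * κ * a1 * ‖y'‖ ^ 2 / del (n - 1) κ ε y' + a2) /
                    del (n - 1) κ ε y' ^ 3) y.1)) := by
      funext y
      have hne := hDne y.1
      simp only [uN, Gf]
      have key : ∀ (D Nq b t : ℝ), D ≠ 0 →
          1 / 2 + t / D + ((t / D) ^ 2 - 1 / 4) * (t / D * (Nq / D + b))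
            = 1 / 2 + t * ((1 / D - (Nq / D + b) / (4 * D))
                + t * (0 + t * ((Nq / D + b) / D ^ 3))) := by
        intro D Nq b t hD
        field_simp
        ring
      exact key _ _ _ _ hne
    rw [hu2, poly3_dnn _ _ _ _ (differentiable_const _) hg1v (differentiable_const 0) hg3v x,
      hp, poly3_fderiv _ _ _ _ hq (differentiable_const 0) hg2p (differentiable_const 0) x 0 1]
    simp only [map_zero, mul_zero, add_zero, zero_mul, zero_add, mul_one]
    ring
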